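/- arXiv:2109.10203 — 3 statements merged into one kernel-verified Lean document; each statement's English description precedes it below -/
import Mathlib

section
/- Let G be a finite connected modular graph. If (x1,x2,x3,x4) is an isometric rectangle in G, then d(x1,x2) = d(x3,x4) and d(x1,x4) = d(x2,x3). Moreover, for any vertex y1 ∈ I(x1,x4) there exists a vertex y2 ∈ I(x2,x3) such that (x1,x2,y2,y1) and (y1,y2,x3,x4) are isometric rectangles. -/
namespace ZeroExt

variable {V : Type*}

/-- The metric interval `I(x,y)` in a graph. -/
def interval (G : SimpleGraph V) (x y : V) : Set V :=
  {z | G.dist x z + G.dist z y = G.dist x y}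

/-- `m` is a median of `x, y, z`. -/
def IsMedian (G : SimpleGraph V) (x y z m : V) : Prop :=
  m ∈ interval G x y ∧ m ∈ interval G y z ∧ m ∈ interval G x z

/-- A graph is modular if every triple of vertices has a median. -/
def Modular (G : SimpleGraph V) : Prop :=
  ∀ x y z : V, ∃ m : V, IsMedian G x y z m

/-- `(a,b,c)` is a shortest subpath. -/
def ShortestTriple (G : SimpleGraph V) (a b c : V) : Prop :=
  G.dist a b + G.dist b c = G.dist a c

/-- `(a,b,c,d)` is a shortest subpath. -/
def ShortestQuad (G : SimpleGraph V) (a b c d : V) : Prop :=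
  G.dist a b + G.dist b c + G.dist c d = G.dist a d

/-- `(x1,x2,x3,x4)` is an isometric rectangle. -/
def IsoRect (G : SimpleGraph V) (x1 x2 x3 x4 : V) : Prop :=
  ShortestTriple G x4 x1 x2 ∧ ShortestTriple G x1 x2 x3 ∧
    ShortestTriple G x2 x3 x4 ∧ ShortestTriple G x3 x4 x1

/-- A set of vertices is convex if it contains the interval of each pair of its points. -/
def Convex (G : SimpleGraph V) (U : Set V) : Prop :=
  ∀ x ∈ U, ∀ y ∈ U, interval G x y ⊆ U

/-- `g` is a gate of `q` at `U`. -/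
def IsGate (G : SimpleGraph V) (U : Set V) (q g : V) : Prop :=
  g ∈ U ∧ ∀ u ∈ U, G.dist q u = G.dist q g + G.dist g u

/-- A 4-cycle in a graph. -/
def IsFourCycle (G : SimpleGraph V) (x1 x2 x3 x4 : V) : Prop :=
  G.Adj x1 x2 ∧ G.Adj x2 x3 ∧ G.Adj x3 x4 ∧ G.Adj x4 x1 ∧ x1 ≠ x3 ∧ x2 ≠ x4

/-- A modular complex: a finite connected modular graph together with an
acyclic admissible edge orientation. -/
structure ModularComplex (V : Type*) [Fintype V] where
  G : SimpleGraph V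
  connected : G.Connected
  modular : Modular G
  ori : V → V → Prop
  ori_adj : ∀ {x y : V}, ori x y → G.Adj x y
  ori_total : ∀ {x y : V}, G.Adj x y → ori x y ∨ ori y x
  acyclic : ∀ {x y : V}, Relation.ReflTransGen ori x y → Relation.ReflTransGen ori y x → x = y
  admissible : ∀ {x1 x2 x3 x4 : V}, IsFourCycle G x1 x2 x3 x4 → ori x1 x2 → ori x4 x3

variable [Fintype V]

/-- The partial order `⪯` induced by the orientation. -/
def ModularComplex.le (Γ : ModularComplex V) : V → V → Prop :=
  Relation.ReflTransGen Γ.ori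

/-- The order interval `[p,q]`. -/
def ModularComplex.Icc (Γ : ModularComplex V) (p q : V) : Set V :=
  {x | Γ.le p x ∧ Γ.le x q}

/-- `m` is the greatest lower bound `p ∧ q`. -/
def ModularComplex.IsMeet (Γ : ModularComplex V) (p q m : V) : Prop :=
  Γ.le m p ∧ Γ.le m q ∧ ∀ x : V, Γ.le x p → Γ.le x q → Γ.le x m

/-- `j` is the least upper bound `p ∨ q`. -/
def ModularComplex.IsJoin (Γ : ModularComplex V) (p q j : V) : Prop :=
  Γ.le p j ∧ Γ.le q j ∧ ∀ x : V, Γ.le p x → Γ.le q x → Γ.le j x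

/-- `(p,q)` is a Boolean pair. -/
def ModularComplex.BooleanPair (Γ : ModularComplex V) (p q : V) : Prop :=
  ∃ (k : ℕ) (φ : Finset (Fin k) → V), Function.Injective φ ∧
    φ ∅ = p ∧ φ Finset.univ = q ∧
    ∀ (S : Finset (Fin k)) (i : Fin k), i ∉ S → Γ.ori (φ S) (φ (insert i S))

/-- An extended modular complex: a modular complex with an admissible relation `⊑`. -/
structure ExtendedModularComplex (V : Type*) [Fintype V] extends ModularComplex V where
  sq : V → V → Prop
  sq_le : ∀ {p q : V}, sq p q → toModularComplex.le p q
  sq_refl : ∀ p : V, sq p p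
  sq_edge : ∀ {p q : V}, ori p q → sq p q
  sq_interval : ∀ {p q a b : V}, sq p q → toModularComplex.le a b →
    a ∈ toModularComplex.Icc p q → b ∈ toModularComplex.Icc p q → sq a b
  sq_join : ∀ {p q1 q2 j : V}, sq p q1 → sq p q2 → toModularComplex.IsJoin q1 q2 j → sq p j
  sq_meet : ∀ {p1 p2 q m : V}, sq p1 q → sq p2 q → toModularComplex.IsMeet p1 p2 m → sq m q

/-- `L^+_p = {x : p ⊑ x}`. -/
def ExtendedModularComplex.Lpos (Γ : ExtendedModularComplex V) (p : V) : Set V :=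
  {x | Γ.sq p x}

/-- `L^-_p = {x : x ⊑ p}`. -/
def ExtendedModularComplex.Lneg (Γ : ExtendedModularComplex V) (p : V) : Set V :=
  {x | Γ.sq x p}

/-- `p, q` are ◇-neighbors. -/
def ExtendedModularComplex.DiamondNb (Γ : ExtendedModularComplex V) (p q : V) : Prop :=
  ∃ a b : V, Γ.sq a b ∧ p ∈ Γ.Icc a b ∧ q ∈ Γ.Icc a b

/-- The thickening `Δ(Γ)`. -/
def ExtendedModularComplex.thick (Γ : ExtendedModularComplex V) : SimpleGraph V where
  Adj p q := p ≠ q ∧ Γ.DiamondNb p q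
  symm := by
    constructor
    rintro p q ⟨hne, a, b, hab, hp, hq⟩
    exact ⟨hne.symm, a, b, hab, hq, hp⟩
  loopless := by constructor; rintro p ⟨hne, -⟩; exact hne rfl


end ZeroExt

/-! Each diagonal of an isometric rectangle is the sum of two adjacent sides in two ways, which
forces opposite sides to be equal. Moving an endpoint of a shortest subpath `(a, b, c)` into
`I(a, b)` keeps it shortest, so for a median `y2` of `x2, x3, y1` all corners of the two
candidate rectangles at the old vertices are geodesic; the three median equations then pin down
`d(y1, y2) = d(x1, x2)`, which makes the corners at `y1` and `y2` geodesic too. -/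

namespace ZeroExt

variable {V : Type*} {G : SimpleGraph V}

theorem mem_interval_iff_shortestTriple {x y z : V} :
    z ∈ interval G x y ↔ ShortestTriple G x z y :=
  Iff.rfl

theorem ShortestTriple.symm {a b c : V} (h : ShortestTriple G a b c) :
    ShortestTriple G c b a := by
  simp only [ShortestTriple, G.dist_comm] at h ⊢
  omega

theorem mem_interval_comm {x y z : V} (h : z ∈ interval G x y) : z ∈ interval G y x :=
  ShortestTriple.symm h

theorem ShortestTriple.of_mem_interval (hconn : G.Connected) {a b c y : V}
    (h : ShortestTriple G a b c) (hy : y ∈ interval G a b) : ShortestTriple G y b c := by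
  have hyc : G.dist y c ≤ G.dist y b + G.dist b c := hconn.dist_triangle
  have hac : G.dist a c ≤ G.dist a y + G.dist y c := hconn.dist_triangle
  unfold ShortestTriple at h ⊢
  rw [mem_interval_iff_shortestTriple, ShortestTriple] at hy
  omega

theorem IsoRect.dist_opposite_eq {x1 x2 x3 x4 : V} (h : IsoRect G x1 x2 x3 x4) :
    G.dist x1 x2 = G.dist x3 x4 ∧ G.dist x1 x4 = G.dist x2 x3 := by
  obtain ⟨h1, h2, h3, h4⟩ := h
  simp only [ShortestTriple, G.dist_comm] at h1 h2 h3 h4 ⊢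
  omega

theorem IsoRect.split_of_isMedian (hconn : G.Connected) {x1 x2 x3 x4 y1 y2 : V}
    (h : IsoRect G x1 x2 x3 x4) (hy1 : y1 ∈ interval G x1 x4) (hy2 : IsMedian G x2 x3 y1 y2) :
    IsoRect G x1 x2 y2 y1 ∧ IsoRect G y1 y2 x3 x4 := by
  obtain ⟨hsides12, hsides14⟩ := h.dist_opposite_eq
  obtain ⟨h1, h2, h3, h4⟩ := h
  obtain ⟨hy2x, hy2x3, hy2x2⟩ := hy2
  have hy1x2 : ShortestTriple G y1 x1 x2 := h1.of_mem_interval hconn (mem_interval_comm hy1)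
  have hx1y2 : ShortestTriple G x1 x2 y2 :=
    (h2.symm.of_mem_interval hconn (mem_interval_comm hy2x)).symm
  have hy2x4 : ShortestTriple G y2 x3 x4 := h3.of_mem_interval hconn hy2x
  have hx3y1 : ShortestTriple G x3 x4 y1 := (h4.symm.of_mem_interval hconn hy1).symm
  rw [mem_interval_iff_shortestTriple] at hy1 hy2x hy2x3 hy2x2
  unfold IsoRect ShortestTriple at *
  simp only [G.dist_comm] at *
  -- `2 d(y1, y2) = d(x2, y1) + d(x3, y1) - d(x2, x3) = 2 d(x1, x2)` by the median equations.
  have hy1y2 : G.dist y1 y2 = G.dist x1 x2 := by omega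
  exact ⟨⟨hy1x2, hx1y2, hy2x2, by omega⟩, ⟨by omega, by omega, hy2x4, hx3y1⟩⟩

theorem isoRect_sides_eq_and_split_general {V : Type*} (G : SimpleGraph V)
    (hconn : G.Connected) (hmod : Modular G) (x1 x2 x3 x4 : V)
    (hrect : IsoRect G x1 x2 x3 x4) :
    G.dist x1 x2 = G.dist x3 x4 ∧ G.dist x1 x4 = G.dist x2 x3 ∧
    ∀ y1 ∈ interval G x1 x4, ∃ y2 ∈ interval G x2 x3,
      IsoRect G x1 x2 y2 y1 ∧ IsoRect G y1 y2 x3 x4 := by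
  refine ⟨hrect.dist_opposite_eq.1, hrect.dist_opposite_eq.2, fun y1 hy1 => ?_⟩
  obtain ⟨y2, hy2⟩ := hmod x2 x3 y1
  exact ⟨y2, hy2.1, hrect.split_of_isMedian hconn hy1 hy2⟩

/-- In a finite connected modular graph, an isometric rectangle has equal
opposite sides, and every point of `I(x1,x4)` projects to a point of `I(x2,x3)` forming
two isometric rectangles. -/
theorem isoRect_sides_eq_and_split {V : Type*} [Fintype V] (G : SimpleGraph V)
    (hconn : G.Connected) (hmod : Modular G) (x1 x2 x3 x4 : V)
    (hrect : IsoRect G x1 x2 x3 x4) :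
    G.dist x1 x2 = G.dist x3 x4 ∧ G.dist x1 x4 = G.dist x2 x3 ∧
    ∀ y1 ∈ interval G x1 x4, ∃ y2 ∈ interval G x2 x3,
      IsoRect G x1 x2 y2 y1 ∧ IsoRect G y1 y2 x3 x4 :=
  isoRect_sides_eq_and_split_general G hconn hmod x1 x2 x3 x4 hrect

end ZeroExt
end

section
/- Let Γ be a modular complex and let ⊑^Bp be the Boolean-pair relation on its vertices (p ⊑^Bp q iff (p,q) is a Boolean pair). Then ⊑^Bp is admissible for Γ, i.e.: p ⊑^Bp q implies p ⪯ q; p ⊑^Bp p for every vertex p; p ⊑^Bp q for every edge p→q; if p ⊑^Bp q, a ⪯ b and a,b ∈ [p,q], then a ⊑^Bp b; if p ⊑^Bp q1, p ⊑^Bp q2 and q1∨q2 exists, then p ⊑^Bp q1∨q2; and if p1 ⊑^Bp q, p2 ⊑^Bp q and p1∧p2 exists, then p1∧p2 ⊑^Bp q. -/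
namespace ZeroExt

variable {V : Type*}

variable [Fintype V]

/-!
Directed paths of `Γ` are geodesics, so `r = Γ.G.dist p` is a rank function on the elements
above `p`, and the quadrangle condition of the modular graph makes `⪯` semimodular. Hence
elements with a common lower and a common upper bound have a join and (dually, in `Γ.op`) a
meet, and `r x + r y ≤ r (x ∧ y) + r (x ∨ y)`.

A pair `(p, q)` is Boolean exactly when `q` is the join of `p` and some atoms over `p`: a cube
yields its atoms `φ {i}`, and conversely a cube can be doubled along each atom in turn. This
gives closure under joins, and under meets by duality. For intervals it suffices to step down an
edge `b → c`; there the rank inequality shows that every atom below `c` lies below the join of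
one atom not below `b` with the atoms below `b`, so `b` is the join of the atoms below it.
-/

open SimpleGraph Relation

section ModularGraph

omit [Fintype V]
variable {G : SimpleGraph V}

theorem mem_interval {x y z : V} : z ∈ interval G x y ↔ G.dist x z + G.dist z y = G.dist x y :=
  Iff.rfl

namespace Modular

theorem dist_ne_of_adj (hM : Modular G) {u v : V} (huv : G.Adj u v) (x : V) :
    G.dist u x ≠ G.dist v x := by
  obtain ⟨m, hxu, huv', hxv⟩ := hM x u v
  simp only [mem_interval, dist_eq_one_iff_adj.mpr huv] at hxu huv' hxv
  rw [dist_comm (u := u) (v := m)] at huv'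
  rw [dist_comm (u := u), dist_comm (u := v)]
  omega

theorem dist_eq_add_one_or (hM : Modular G) (hG : G.Connected) {u v : V} (huv : G.Adj u v)
    (x : V) : G.dist u x = G.dist v x + 1 ∨ G.dist v x = G.dist u x + 1 := by
  have h₁ := hG.dist_triangle (u := u) (v := v) (w := x)
  have h₂ := hG.dist_triangle (u := v) (v := u) (w := x)
  rw [dist_eq_one_iff_adj.mpr huv] at h₁
  rw [dist_eq_one_iff_adj.mpr huv.symm] at h₂
  have := hM.dist_ne_of_adj huv x
  omega

theorem quadrangle (hM : Modular G) (hG : G.Connected) {v y z w : V}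
    (hvy : G.Adj v y) (hvz : G.Adj v z) (hyz : y ≠ z)
    (hy : G.dist y w + 1 = G.dist v w) (hz : G.dist z w + 1 = G.dist v w) :
    ∃ u, G.Adj y u ∧ G.Adj z u ∧ G.dist u w + 2 = G.dist v w := by
  have hyz₂ : G.dist y z = 2 := by
    have h₂ := hG.dist_triangle (u := y) (v := v) (w := z)
    rw [dist_eq_one_iff_adj.mpr hvy.symm, dist_eq_one_iff_adj.mpr hvz] at h₂
    have h₀ : G.dist y z ≠ 0 := fun h => hyz ((hG.dist_eq_zero_iff).mp h)
    have h₁ : G.dist y z ≠ 1 := fun h =>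
      hM.dist_ne_of_adj (dist_eq_one_iff_adj.mp h) v
        (by rw [dist_comm, dist_eq_one_iff_adj.mpr hvy, dist_comm, dist_eq_one_iff_adj.mpr hvz])
    omega
  obtain ⟨m, hwy, hyz', hwz⟩ := hM w y z
  simp only [mem_interval, hyz₂] at hwy hyz' hwz
  rw [dist_comm (u := y) (v := m)] at hyz'
  have hmy : G.dist m y = 1 := by
    rw [dist_comm (u := w), dist_comm (u := w) (v := y)] at hwy
    rw [dist_comm (u := w), dist_comm (u := w) (v := z)] at hwz
    omega
  refine ⟨m, dist_eq_one_iff_adj.mp (by rw [dist_comm]; exact hmy),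
    dist_eq_one_iff_adj.mp (by rw [dist_comm]; omega), ?_⟩
  rw [dist_comm (u := w), dist_comm (u := w) (v := y)] at hwy
  omega

end Modular

end ModularGraph

@[simp]
theorem _root_.Finset.eraseNone_insert_none {α : Type*} [DecidableEq α] (S : Finset (Option α)) :
    (insert none S).eraseNone = S.eraseNone := by
  ext
  simp

@[simp]
theorem _root_.Finset.eraseNone_insert_some {α : Type*} [DecidableEq α] (S : Finset (Option α))
    (a : α) : (insert (some a) S).eraseNone = insert a S.eraseNone := by
  ext
  simp

@[simp]
theorem _root_.Finset.eraseNone_univ {α : Type*} [Fintype α] :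
    (Finset.univ : Finset (Option α)).eraseNone = Finset.univ := by
  ext
  simp

theorem _root_.Finset.eq_of_eraseNone_eq {α : Type*} {S T : Finset (Option α)}
    (h : S.eraseNone = T.eraseNone) (hnone : none ∈ S ↔ none ∈ T) : S = T := by
  ext (_ | a)
  · exact hnone
  · rw [← Finset.mem_eraseNone, ← Finset.mem_eraseNone, h]

namespace ModularComplex

variable (Γ : ModularComplex V)

theorem le_of_ori {x y : V} (h : Γ.ori x y) : Γ.le x y :=
  ReflTransGen.single h

theorem le_antisymm {x y : V} (hxy : Γ.le x y) (hyx : Γ.le y x) : x = y :=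
  Γ.acyclic hxy hyx

theorem ne_of_ori {x y : V} (h : Γ.ori x y) : x ≠ y :=
  (Γ.ori_adj h).ne

theorem not_ori_of_ori {x y : V} (h : Γ.ori x y) : ¬ Γ.ori y x := fun h' =>
  Γ.ne_of_ori h (Γ.le_antisymm (Γ.le_of_ori h) (Γ.le_of_ori h'))

theorem dist_of_ori {x y : V} (h : Γ.ori x y) : Γ.G.dist x y = 1 :=
  dist_eq_one_iff_adj.mpr (Γ.ori_adj h)

theorem eq_of_dist_eq_zero {x y : V} (h : Γ.G.dist x y = 0) : x = y :=
  Γ.connected.dist_eq_zero_iff.mp h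

theorem dist_eq_succ_of_ori_of_le {x y z : V} (hxy : Γ.ori x y) (hyz : Γ.le y z) :
    Γ.G.dist x z = Γ.G.dist y z + 1 := by
  induction hyz using ReflTransGen.head_induction_on generalizing x with
  | refl => rw [dist_self, Γ.dist_of_ori hxy]
  | head hyy₂ hy₂z ih =>
    rename_i y y₂
    have hy := ih hyy₂
    refine (Γ.modular.dist_eq_add_one_or Γ.connected (Γ.ori_adj hxy) z).resolve_right
      fun hx => ?_
    -- if `x` were closer to `z` than `y`, the quadrangle condition would give a 4-cycle
    -- `x y y₂ u`, oriented `u → y₂` by admissibility, with `u` too close to `z`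
    have hxy₂ : x ≠ y₂ := by
      rintro rfl
      exact Γ.not_ori_of_ori hxy hyy₂
    obtain ⟨u, hxu, hy₂u, hu⟩ := Γ.modular.quadrangle Γ.connected (w := z)
      (Γ.ori_adj hxy).symm (Γ.ori_adj hyy₂) hxy₂ (by omega) (by omega)
    have hyu : y ≠ u := by
      rintro rfl
      omega
    have huy₂ : Γ.ori u y₂ :=
      Γ.admissible ⟨Γ.ori_adj hxy, Γ.ori_adj hyy₂, hy₂u, hxu.symm, hxy₂, hyu⟩ hxy
    have := ih huy₂
    omega

theorem dist_add_dist_of_le {x y z : V} (hxy : Γ.le x y) (hyz : Γ.le y z) :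
    Γ.G.dist x y + Γ.G.dist y z = Γ.G.dist x z := by
  induction hxy using ReflTransGen.head_induction_on with
  | refl => simp
  | head hxx₁ hx₁y ih =>
    rw [Γ.dist_eq_succ_of_ori_of_le hxx₁ hx₁y, Γ.dist_eq_succ_of_ori_of_le hxx₁ (hx₁y.trans hyz),
      ← ih]
    omega

theorem ori_of_le_of_dist_eq_one {x y : V} (h : Γ.le x y) (hd : Γ.G.dist x y = 1) :
    Γ.ori x y := by
  rcases h.cases_head with rfl | ⟨x₁, hxx₁, hx₁y⟩
  · simp at hd
  · have := Γ.dist_eq_succ_of_ori_of_le hxx₁ hx₁y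
    rwa [Γ.eq_of_dist_eq_zero (by omega : Γ.G.dist x₁ y = 0)] at hxx₁

theorem eq_of_le_of_dist_eq {b x y : V} (hbx : Γ.le b x) (hxy : Γ.le x y)
    (hd : Γ.G.dist b x = Γ.G.dist b y) : x = y := by
  have := Γ.dist_add_dist_of_le hbx hxy
  exact Γ.eq_of_dist_eq_zero (by omega)

theorem ori_and_le_of_adj {b z w : V} (hbw : Γ.le b w) (hbz : Γ.G.Adj b z)
    (hd : Γ.G.dist z w + 1 = Γ.G.dist b w) : Γ.ori b z ∧ Γ.le z w := by
  induction hbw using ReflTransGen.head_induction_on generalizing z with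
  | refl => simp at hd
  | head hbb₁ hb₁w ih =>
    rename_i b b₁
    have hb := Γ.dist_eq_succ_of_ori_of_le hbb₁ hb₁w
    by_cases hzb₁ : z = b₁
    · subst hzb₁
      exact ⟨hbb₁, hb₁w⟩
    obtain ⟨u, hzu, hb₁u, hu⟩ := Γ.modular.quadrangle Γ.connected
      hbz (Γ.ori_adj hbb₁) hzb₁ hd (by omega)
    obtain ⟨hb₁u', huw⟩ := ih hb₁u (by omega)
    have hbu : b ≠ u := by
      rintro rfl
      omega
    refine ⟨Γ.admissible ⟨Γ.ori_adj hb₁u', hzu.symm, hbz.symm, Γ.ori_adj hbb₁,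
      Ne.symm hzb₁, Ne.symm hbu⟩ hb₁u', ReflTransGen.head ?_ huw⟩
    exact Γ.admissible ⟨Γ.ori_adj hbb₁, hb₁u, hzu.symm, hbz.symm, hbu, Ne.symm hzb₁⟩ hbb₁

section Join

variable {Γ}

theorem IsJoin.unique {x y j j' : V} (h : Γ.IsJoin x y j) (h' : Γ.IsJoin x y j') : j = j' :=
  Γ.le_antisymm (h.2.2 _ h'.1 h'.2.1) (h'.2.2 _ h.1 h.2.1)

theorem IsJoin.symm {x y j : V} (h : Γ.IsJoin x y j) : Γ.IsJoin y x j :=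
  ⟨h.2.1, h.1, fun v hy hx => h.2.2 v hx hy⟩

theorem isJoin_of_le {x y : V} (h : Γ.le x y) : Γ.IsJoin x y y :=
  ⟨h, .refl, fun _ _ hy => hy⟩

theorem IsJoin.isJoin_iff_of_le {x₁ x y j₁ j : V} (h₁ : Γ.IsJoin x₁ y j₁) (hx : Γ.le x₁ x) :
    Γ.IsJoin x j₁ j ↔ Γ.IsJoin x y j :=
  ⟨fun h => ⟨h.1, h₁.2.1.trans h.2.1, fun v hxv hyv => h.2.2 v hxv (h₁.2.2 v (hx.trans hxv) hyv)⟩,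
    fun h => ⟨h.1, h₁.2.2 _ (hx.trans h.1) h.2.1, fun v hxv hjv => h.2.2 v hxv (h₁.2.1.trans hjv)⟩⟩

end Join

theorem eq_of_ori_of_ori {x z u u' : V} (hxz : x ≠ z) (hxu : Γ.ori x u) (hzu : Γ.ori z u)
    (hxu' : Γ.ori x u') (hzu' : Γ.ori z u') : u = u' := by
  by_contra hne
  exact Γ.not_ori_of_ori hzu'
    (Γ.admissible ⟨Γ.ori_adj hxu, (Γ.ori_adj hzu).symm, Γ.ori_adj hzu', (Γ.ori_adj hxu').symm,
      hxz, hne⟩ hxu)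

theorem exists_ori_ori_le {c x z w : V} (hcx : Γ.ori c x) (hcz : Γ.ori c z) (hxz : x ≠ z)
    (hxw : Γ.le x w) (hzw : Γ.le z w) : ∃ u, Γ.ori x u ∧ Γ.ori z u ∧ Γ.le u w := by
  have hx := Γ.dist_eq_succ_of_ori_of_le hcx hxw
  have hz := Γ.dist_eq_succ_of_ori_of_le hcz hzw
  obtain ⟨u, hxu, hzu, hu⟩ := Γ.modular.quadrangle Γ.connected
    (Γ.ori_adj hcx) (Γ.ori_adj hcz) hxz hx.symm (by omega)
  obtain ⟨hxu', huw⟩ := Γ.ori_and_le_of_adj hxw hxu (by omega)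
  have hcu : c ≠ u := by
    rintro rfl
    omega
  exact ⟨u, hxu', Γ.admissible ⟨Γ.ori_adj hcx, hxu, hzu.symm, (Γ.ori_adj hcz).symm, hcu, hxz⟩ hcx,
    huw⟩

theorem exists_isJoin_of_ori_of_ori {c x z w : V} (hcx : Γ.ori c x) (hcz : Γ.ori c z)
    (hxz : x ≠ z) (hxw : Γ.le x w) (hzw : Γ.le z w) :
    ∃ u, Γ.ori x u ∧ Γ.ori z u ∧ Γ.IsJoin x z u := by
  obtain ⟨u, hxu, hzu, -⟩ := Γ.exists_ori_ori_le hcx hcz hxz hxw hzw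
  refine ⟨u, hxu, hzu, Γ.le_of_ori hxu, Γ.le_of_ori hzu, fun v hxv hzv => ?_⟩
  obtain ⟨u', hxu', hzu', hu'v⟩ := Γ.exists_ori_ori_le hcx hcz hxz hxv hzv
  rwa [Γ.eq_of_ori_of_ori hxz hxu hzu hxu' hzu']

theorem exists_isJoin_of_ori {c x y w : V} (hcx : Γ.ori c x) (hcy : Γ.le c y)
    (hxw : Γ.le x w) (hyw : Γ.le y w) : ∃ j, Γ.IsJoin x y j ∧ (¬ Γ.le x y → Γ.ori y j) := by
  induction hcy using ReflTransGen.head_induction_on generalizing x with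
  | refl => exact ⟨x, (isJoin_of_le (Γ.le_of_ori hcx)).symm, fun _ => hcx⟩
  | head hcz hzy ih =>
    rename_i c z
    by_cases hxz : x = z
    · subst hxz
      exact ⟨y, isJoin_of_le hzy, fun h => absurd hzy h⟩
    obtain ⟨u, hxu, hzu, hu⟩ := Γ.exists_isJoin_of_ori_of_ori hcx hcz hxz hxw (hzy.trans hyw)
    obtain ⟨j, hj, hyj⟩ := ih hzu (hu.2.2 w hxw (hzy.trans hyw))
    exact ⟨j, ((hu.symm.isJoin_iff_of_le hzy).mp hj.symm).symm,
      fun hxy => hyj fun huy => hxy ((Γ.le_of_ori hxu).trans huy)⟩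

theorem ori_of_isJoin {c x y j : V} (hcx : Γ.ori c x) (hcy : Γ.le c y) (hj : Γ.IsJoin x y j)
    (hxy : ¬ Γ.le x y) : Γ.ori y j := by
  obtain ⟨j', hj', hyj'⟩ := Γ.exists_isJoin_of_ori hcx hcy hj.1 hj.2.1
  exact hj'.unique hj ▸ hyj' hxy

theorem exists_isJoin {b x y w : V} (hbx : Γ.le b x) (hby : Γ.le b y) (hxw : Γ.le x w)
    (hyw : Γ.le y w) : ∃ j, Γ.IsJoin x y j := by
  induction hbx with
  | refl => exact ⟨y, isJoin_of_le hby⟩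
  | tail _ hx₁x ih =>
    obtain ⟨j₁, hj₁⟩ := ih ((Γ.le_of_ori hx₁x).trans hxw)
    obtain ⟨j, hj, -⟩ := Γ.exists_isJoin_of_ori hx₁x hj₁.1 hxw
      (hj₁.2.2 w ((Γ.le_of_ori hx₁x).trans hxw) hyw)
    exact ⟨j, (hj₁.isJoin_iff_of_le (Γ.le_of_ori hx₁x)).mp hj⟩

def IsJoinOver (p : V) (A : Set V) (j : V) : Prop :=
  Γ.le p j ∧ (∀ a ∈ A, Γ.le a j) ∧ ∀ v, Γ.le p v → (∀ a ∈ A, Γ.le a v) → Γ.le j v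

theorem exists_isJoinOver {p w : V} (s : Finset V) (hp : ∀ x ∈ s, Γ.le p x)
    (hw : ∀ x ∈ s, Γ.le x w) (hpw : Γ.le p w) : ∃ u, Γ.IsJoinOver p s u ∧ Γ.le u w := by
  classical
  induction s using Finset.induction_on with
  | empty => exact ⟨p, ⟨.refl, by simp, fun _ hv _ => hv⟩, hpw⟩
  | @insert x s _ ih =>
    simp only [Finset.mem_insert, forall_eq_or_imp] at hp hw
    obtain ⟨u, hu, huw⟩ := ih hp.2 hw.2
    obtain ⟨u', hu'⟩ := Γ.exists_isJoin hu.1 hp.1 huw hw.1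
    refine ⟨u', ⟨hu.1.trans hu'.1, ?_, fun v hpv hv => ?_⟩, hu'.2.2 w huw hw.1⟩
    · simp only [Finset.coe_insert, Set.mem_insert_iff, Finset.mem_coe, forall_eq_or_imp]
      exact ⟨hu'.2.1, fun a ha => (hu.2.1 a ha).trans hu'.1⟩
    · simp only [Finset.coe_insert, Set.mem_insert_iff, Finset.mem_coe, forall_eq_or_imp] at hv
      exact hu'.2.2 v (hu.2.2 v hpv hv.2) hv.1

def op : ModularComplex V where
  G := Γ.G
  connected := Γ.connected
  modular := Γ.modular
  ori x y := Γ.ori y x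
  ori_adj h := (Γ.ori_adj h).symm
  ori_total h := Γ.ori_total h.symm
  acyclic h h' := Γ.acyclic (reflTransGen_swap.mp h') (reflTransGen_swap.mp h)
  admissible := fun ⟨h₁₂, h₂₃, h₃₄, h₄₁, h₁₃, h₂₄⟩ h =>
    Γ.admissible ⟨h₁₂.symm, h₄₁.symm, h₃₄.symm, h₂₃.symm, h₂₄, h₁₃⟩ h

theorem op_le {x y : V} : Γ.op.le x y ↔ Γ.le y x :=
  reflTransGen_swap

theorem op_isJoin {x y m : V} : Γ.op.IsJoin x y m ↔ Γ.IsMeet x y m := by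
  simp only [IsJoin, IsMeet, op_le]

theorem exists_isMeet {b x y w : V} (hbx : Γ.le b x) (hby : Γ.le b y) (hxw : Γ.le x w)
    (hyw : Γ.le y w) : ∃ m, Γ.IsMeet x y m := by
  obtain ⟨m, hm⟩ := Γ.op.exists_isJoin ((Γ.op_le).mpr hxw) ((Γ.op_le).mpr hyw)
    ((Γ.op_le).mpr hbx) ((Γ.op_le).mpr hby)
  exact ⟨m, Γ.op_isJoin.mp hm⟩

theorem dist_le_of_isJoin {m z y w j : V} (hmz : Γ.le m z) (hmy : Γ.le m y) (hzw : Γ.le z w)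
    (hyw : Γ.le y w) (hj : Γ.IsJoin z y j) : Γ.G.dist y j ≤ Γ.G.dist m z := by
  induction hmz generalizing j with
  | refl => simp [hj.unique (isJoin_of_le hmy)]
  | tail hmz₁ hz₁z ih =>
    rename_i z₁ z
    have hz₁w := (Γ.le_of_ori hz₁z).trans hzw
    obtain ⟨j₁, hj₁⟩ := Γ.exists_isJoin hmz₁ hmy hz₁w hyw
    have hzj₁j := (hj₁.isJoin_iff_of_le (Γ.le_of_ori hz₁z)).mpr hj
    have hyj := Γ.dist_add_dist_of_le hj₁.2.1 hzj₁j.2.1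
    have hmz := Γ.dist_add_dist_of_le hmz₁ (Γ.le_of_ori hz₁z)
    rw [Γ.dist_of_ori hz₁z] at hmz
    have := ih hz₁w hj₁
    by_cases hzj₁ : Γ.le z j₁
    · rw [hzj₁j.unique (isJoin_of_le hzj₁)]
      omega
    · rw [Γ.dist_of_ori (Γ.ori_of_isJoin hz₁z hj₁.1 hzj₁j hzj₁)] at hyj
      omega

theorem dist_add_dist_le_of_isMeet_of_isJoin {p x y m j : V} (hpx : Γ.le p x) (hpy : Γ.le p y)
    (hm : Γ.IsMeet x y m) (hj : Γ.IsJoin x y j) :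
    Γ.G.dist p x + Γ.G.dist p y ≤ Γ.G.dist p m + Γ.G.dist p j := by
  have := Γ.op.dist_le_of_isJoin ((Γ.op_le).mpr hj.1) ((Γ.op_le).mpr hj.2.1) ((Γ.op_le).mpr hpx)
    ((Γ.op_le).mpr hpy) (Γ.op_isJoin.mpr hm)
  have hpm := hm.2.2 p hpx hpy
  have h₁ := Γ.dist_add_dist_of_le hpm hm.2.1
  have h₂ := Γ.dist_add_dist_of_le hpx hj.1
  change Γ.G.dist y m ≤ Γ.G.dist j x at this
  rw [dist_comm (u := y), dist_comm (u := j)] at this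
  omega

/-- The witness is `s = (a ∨ a₁) ∧ b`, which is an atom over `p` by the rank inequality
`dist_add_dist_le_of_isMeet_of_isJoin`. -/
theorem exists_ori_le_of_ori {p b c a₁ a : V} (hpb : Γ.le p b) (hbc : Γ.ori b c)
    (ha₁ : Γ.ori p a₁) (ha : Γ.ori p a) (ha₁c : Γ.le a₁ c) (hac : Γ.le a c)
    (ha₁b : ¬ Γ.le a₁ b) (haa₁ : a ≠ a₁) :
    ∃ s, Γ.ori p s ∧ Γ.le s b ∧ ∀ v, Γ.le s v → Γ.le a₁ v → Γ.le a v := by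
  obtain ⟨j, ha₁j, -, hj⟩ := Γ.exists_isJoin_of_ori_of_ori ha₁ ha haa₁.symm ha₁c hac
  have hjc : Γ.le j c := hj.2.2 c ha₁c hac
  have hpj : Γ.le p j := (Γ.le_of_ori ha₁).trans hj.1
  obtain ⟨c', hc', hbc'⟩ := Γ.exists_isJoin_of_ori ha₁ hpb ha₁c (Γ.le_of_ori hbc)
  have hcc' : c' = c := Γ.eq_of_le_of_dist_eq (Γ.le_of_ori (hbc' ha₁b))
    (hc'.2.2 c ha₁c (Γ.le_of_ori hbc)) (by rw [Γ.dist_of_ori hbc, Γ.dist_of_ori (hbc' ha₁b)])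
  rw [hcc'] at hc'
  have hjb : Γ.IsJoin j b c := ⟨hjc, hc'.2.1, fun v hjv hbv => hc'.2.2 v (hj.1.trans hjv) hbv⟩
  obtain ⟨s, hs⟩ := Γ.exists_isMeet hpj hpb hjc hc'.2.1
  have hps : Γ.le p s := hs.2.2 p hpj hpb
  have hmod := Γ.dist_add_dist_le_of_isMeet_of_isJoin hpj hpb hs hjb
  have hdj := Γ.dist_add_dist_of_le (Γ.le_of_ori ha₁) (Γ.le_of_ori ha₁j)
  have hdc := Γ.dist_add_dist_of_le hpb (Γ.le_of_ori hbc)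
  have hds := Γ.dist_add_dist_of_le hps hs.1
  rw [Γ.dist_of_ori ha₁, Γ.dist_of_ori ha₁j] at hdj
  rw [Γ.dist_of_ori hbc] at hdc
  have hsj : s ≠ j := fun h => ha₁b (hj.1.trans (h ▸ hs.2.1))
  have hps' : Γ.ori p s := Γ.ori_of_le_of_dist_eq_one hps <| by
    have := mt (Γ.eq_of_le_of_dist_eq hps hs.1) hsj
    omega
  have hsa₁ : s ≠ a₁ := fun h => ha₁b (h ▸ hs.2.1)
  obtain ⟨j', -, ha₁j', hj'⟩ := Γ.exists_isJoin_of_ori_of_ori hps' ha₁ hsa₁ hs.1 hj.1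
  have hj'j : j' = j := Γ.eq_of_le_of_dist_eq (Γ.le_of_ori ha₁j') (hj'.2.2 j hs.1 hj.1)
    (by rw [Γ.dist_of_ori ha₁j', Γ.dist_of_ori ha₁j])
  exact ⟨s, hps', hs.2.1, fun v hsv ha₁v => hj.2.1.trans (hj'j ▸ hj'.2.2 v hsv ha₁v)⟩

section Cube

variable {ι : Type*} [DecidableEq ι]

def IsCube (φ : Finset ι → V) : Prop :=
  Function.Injective φ ∧ ∀ (S : Finset ι) (i : ι), i ∉ S → Γ.ori (φ S) (φ (insert i S))

variable {Γ} {φ : Finset ι → V}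

theorem IsCube.booleanPair [Fintype ι] (hφ : Γ.IsCube φ) :
    Γ.BooleanPair (φ ∅) (φ Finset.univ) := by
  let e := (Fintype.equivFin ι).symm.toEmbedding
  refine ⟨Fintype.card ι, fun T => φ (T.map e), fun S T h => Finset.map_injective e (hφ.1 h),
    by simp, by simp [e, Finset.map_univ_equiv], fun S i hi => ?_⟩
  simp only [Finset.map_insert]
  exact hφ.2 _ _ (by simpa using hi)

theorem IsCube.le_of_subset (hφ : Γ.IsCube φ) {S T : Finset ι} (hST : S ⊆ T) :
    Γ.le (φ S) (φ T) := by
  suffices ∀ U, Γ.le (φ S) (φ (U ∪ S)) by simpa [Finset.union_eq_left.mpr hST] using this T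
  intro U
  induction U using Finset.induction_on with
  | empty =>
    rw [Finset.empty_union]
    exact .refl
  | @insert i U _ ih =>
    rw [Finset.insert_union]
    by_cases hi : i ∈ U ∪ S
    · rwa [Finset.insert_eq_of_mem hi]
    · exact ih.tail (hφ.2 _ _ hi)

theorem IsCube.dist_empty (hφ : Γ.IsCube φ) (S : Finset ι) : Γ.G.dist (φ ∅) (φ S) = S.card := by
  induction S using Finset.induction_on with
  | empty => simp
  | @insert i S hiS ih =>
    rw [← Γ.dist_add_dist_of_le (hφ.le_of_subset S.empty_subset) (Γ.le_of_ori (hφ.2 S i hiS)),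
      Γ.dist_of_ori (hφ.2 S i hiS), ih, Finset.card_insert_of_notMem hiS]

theorem IsCube.ori_empty_singleton (hφ : Γ.IsCube φ) (i : ι) : Γ.ori (φ ∅) (φ {i}) := by
  simpa using hφ.2 ∅ i (Finset.notMem_empty i)

theorem IsCube.isJoin_insert_insert (hφ : Γ.IsCube φ) {S : Finset ι} {i j : ι} (hij : i ≠ j)
    (hiS : i ∉ S) (hjS : j ∉ S) :
    Γ.IsJoin (φ (insert i S)) (φ (insert j S)) (φ (insert i (insert j S))) := by
  have hi : Γ.ori (φ (insert j S)) (φ (insert i (insert j S))) :=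
    hφ.2 _ _ (by simp [hij, hiS])
  have hj : Γ.ori (φ (insert i S)) (φ (insert i (insert j S))) := by
    rw [Finset.insert_comm]
    exact hφ.2 _ _ (by simp [hij.symm, hjS])
  have hne : φ (insert i S) ≠ φ (insert j S) := fun h => by
    have := congrArg (i ∈ ·) (hφ.1 h)
    simp [hij, hiS] at this
  obtain ⟨u, hu, hu', hju⟩ := Γ.exists_isJoin_of_ori_of_ori (hφ.2 S i hiS) (hφ.2 S j hjS) hne
    (Γ.le_of_ori hj) (Γ.le_of_ori hi)
  rwa [Γ.eq_of_ori_of_ori hne hu hu' hj hi] at hju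

theorem IsCube.isJoin_singleton (hφ : Γ.IsCube φ) {S : Finset ι} {i : ι} (hiS : i ∉ S) :
    Γ.IsJoin (φ S) (φ {i}) (φ (insert i S)) := by
  induction S using Finset.induction_on with
  | empty => simpa using isJoin_of_le (hφ.le_of_subset (Finset.empty_subset {i}))
  | @insert j S hjS ih =>
    simp only [Finset.mem_insert, not_or] at hiS
    have hsq := hφ.isJoin_insert_insert hiS.1 hiS.2 hjS
    refine ⟨hφ.le_of_subset (Finset.subset_insert _ _), hφ.le_of_subset (by simp),
      fun v hSv hiv => hsq.2.2 v ((ih hiS.2).2.2 v ?_ hiv) hSv⟩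
    exact (hφ.le_of_subset (Finset.subset_insert j S)).trans hSv

theorem IsCube.le_of_le_of_singleton_le (hφ : Γ.IsCube φ) {S T : Finset ι} {v : V}
    (hS : Γ.le (φ S) v) (hT : ∀ i ∈ T, Γ.le (φ {i}) v) : Γ.le (φ (T ∪ S)) v := by
  induction T using Finset.induction_on with
  | empty => simpa using hS
  | @insert i T _ ih =>
    simp only [Finset.mem_insert, forall_eq_or_imp] at hT
    rw [Finset.insert_union]
    by_cases hi : i ∈ T ∪ S
    · rw [Finset.insert_eq_of_mem hi]
      exact ih hT.2
    · exact (hφ.isJoin_singleton hi).2.2 v (ih hT.2) hT.1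

theorem IsCube.isJoinOver [Fintype ι] (hφ : Γ.IsCube φ) :
    Γ.IsJoinOver (φ ∅) (Set.range fun i => φ {i}) (φ Finset.univ) := by
  refine ⟨hφ.le_of_subset (Finset.empty_subset _), ?_, fun v hv hi => ?_⟩
  · rintro _ ⟨i, rfl⟩
    exact hφ.le_of_subset (Finset.subset_univ _)
  · simpa using hφ.le_of_le_of_singleton_le hv (T := Finset.univ) fun i _ => hi _ ⟨i, rfl⟩

theorem IsCube.option {f : Finset ι → V} (hφ : Γ.IsCube φ) (hf : Γ.IsCube f)
    (hφf : ∀ T, Γ.ori (φ T) (f T)) (hne : ∀ T T', φ T ≠ f T') :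
    Γ.IsCube fun S : Finset (Option ι) => if none ∈ S then f S.eraseNone else φ S.eraseNone := by
  refine ⟨fun S T h => ?_, ?_⟩
  · by_cases hS : none ∈ S <;> by_cases hT : none ∈ T <;> simp only [hS, hT, if_true, if_false] at h
    · exact Finset.eq_of_eraseNone_eq (hf.1 h) (iff_of_true hS hT)
    · exact absurd h.symm (hne _ _)
    · exact absurd h (hne _ _)
    · exact Finset.eq_of_eraseNone_eq (hφ.1 h) (iff_of_false hS hT)
  · rintro S (_ | i) hi
    · simpa [hi] using hφf _
    · have hi' : i ∉ S.eraseNone := by simpa using hi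
      simp only [Finset.mem_insert, reduceCtorEq, false_or, Finset.eraseNone_insert_some]
      split_ifs
      · exact hf.2 _ _ hi'
      · exact hφ.2 _ _ hi'

theorem IsCube.isCube_of_isJoin {a : V} {f : Finset ι → V} (hφ : Γ.IsCube φ)
    (ha : Γ.ori (φ ∅) a) (haφ : ∀ T, ¬ Γ.le a (φ T)) (hf : ∀ T, Γ.IsJoin (φ T) a (f T)) :
    Γ.IsCube f ∧ ∀ T, Γ.ori (φ T) (f T) := by
  have hφ₀ : ∀ T, Γ.le (φ ∅) (φ T) := fun T => hφ.le_of_subset T.empty_subset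
  have hφf : ∀ T, Γ.ori (φ T) (f T) := fun T =>
    Γ.ori_of_isJoin ha (hφ₀ T) (hf T).symm (haφ T)
  have hdist : ∀ T, Γ.G.dist (φ ∅) (f T) = T.card + 1 := fun T => by
    rw [← Γ.dist_add_dist_of_le (hφ₀ T) (Γ.le_of_ori (hφf T)), hφ.dist_empty, Γ.dist_of_ori (hφf T)]
  have hsub : ∀ {T T'}, f T = f T' → T' ⊆ T := fun {T T'} h => by
    have hle : Γ.le (φ (T' ∪ T)) (f T) := hφ.le_of_le_of_singleton_le (hf T).1 fun i hi =>
      (hφ.le_of_subset (Finset.singleton_subset_iff.mpr hi)).trans (h ▸ (hf T').1)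
    have hd := Γ.dist_add_dist_of_le (hφ₀ _) hle
    rw [hφ.dist_empty, hdist] at hd
    have hcard : (T' ∪ T).card ≠ T.card + 1 := fun hc => haφ (T' ∪ T) <|
      Γ.eq_of_le_of_dist_eq (hφ₀ _) hle (by rw [hφ.dist_empty, hdist, hc]) ▸ (hf T).2.1
    have := Finset.eq_of_subset_of_card_le (s := T) (t := T' ∪ T) Finset.subset_union_right
      (by omega)
    exact Finset.union_eq_right.mp this.symm
  refine ⟨⟨fun T T' h => (hsub h.symm).antisymm (hsub h), fun T i hi => ?_⟩, hφf⟩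
  have hle : Γ.le (f T) (f (insert i T)) := (hf T).2.2 _
    ((hφ.le_of_subset (Finset.subset_insert i T)).trans (hf _).1) (hf _).2.1
  refine Γ.ori_of_le_of_dist_eq_one hle ?_
  have := Γ.dist_add_dist_of_le ((hφ₀ T).trans (Γ.le_of_ori (hφf T))) hle
  rw [hdist, hdist, Finset.card_insert_of_notMem hi] at this
  omega

theorem IsCube.exists_isCube_option [Fintype ι] (hφ : Γ.IsCube φ) {a j : V}
    (ha : Γ.ori (φ ∅) a) (haφ : ¬ Γ.le a (φ Finset.univ)) (hj : Γ.IsJoin (φ Finset.univ) a j) :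
    ∃ ψ : Finset (Option ι) → V, Γ.IsCube ψ ∧ ψ ∅ = φ ∅ ∧ ψ Finset.univ = j := by
  have haφ' : ∀ T, ¬ Γ.le a (φ T) := fun T h => haφ (h.trans (hφ.le_of_subset T.subset_univ))
  choose f hf using fun T : Finset ι => Γ.exists_isJoin (hφ.le_of_subset T.empty_subset)
    (Γ.le_of_ori ha) ((hφ.le_of_subset T.subset_univ).trans hj.1) hj.2.1
  obtain ⟨hf', hφf⟩ := hφ.isCube_of_isJoin ha haφ' hf
  exact ⟨_, hφ.option hf' hφf fun T T' h => haφ' T (h ▸ (hf T').2.1), by simp,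
    by simpa using (hf _).unique hj⟩

end Cube

section BooleanPair

variable {Γ}

theorem BooleanPair.exists_isCube {p q : V} (h : Γ.BooleanPair p q) :
    ∃ (k : ℕ) (φ : Finset (Fin k) → V), Γ.IsCube φ ∧ φ ∅ = p ∧ φ Finset.univ = q :=
  let ⟨k, φ, hinj, h₀, h₁, hφ⟩ := h
  ⟨k, φ, ⟨hinj, hφ⟩, h₀, h₁⟩

theorem BooleanPair.le {p q : V} (h : Γ.BooleanPair p q) : Γ.le p q := by
  obtain ⟨k, φ, hφ, rfl, rfl⟩ := h.exists_isCube
  exact hφ.le_of_subset (Finset.empty_subset _)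

theorem BooleanPair.exists_isJoinOver {p q : V} (h : Γ.BooleanPair p q) :
    ∃ A : Set V, (∀ a ∈ A, Γ.ori p a) ∧ Γ.IsJoinOver p A q := by
  obtain ⟨k, φ, hφ, rfl, rfl⟩ := h.exists_isCube
  exact ⟨_, by rintro _ ⟨i, rfl⟩; exact hφ.ori_empty_singleton i, hφ.isJoinOver⟩

theorem BooleanPair.op {p q : V} (h : Γ.BooleanPair p q) : Γ.op.BooleanPair q p := by
  obtain ⟨k, φ, hφ, rfl, rfl⟩ := h.exists_isCube
  have hψ : Γ.op.IsCube fun S => φ Sᶜ := by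
    refine ⟨fun S T hST => compl_injective (hφ.1 hST), fun S i hi => ?_⟩
    show Γ.ori (φ (insert i S)ᶜ) (φ Sᶜ)
    rw [Finset.compl_insert]
    simpa [Finset.insert_erase (Finset.mem_compl.mpr hi)] using hφ.2 (Sᶜ.erase i) i (by simp)
  simpa using hψ.booleanPair

theorem booleanPair_refl (p : V) : Γ.BooleanPair p p :=
  IsCube.booleanPair (ι := Empty) (φ := fun _ => p)
    ⟨fun S T _ => Subsingleton.elim S T, fun _ i => i.elim⟩

theorem BooleanPair.of_isJoin_of_ori {p q a j : V} (h : Γ.BooleanPair p q) (ha : Γ.ori p a)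
    (hj : Γ.IsJoin q a j) : Γ.BooleanPair p j := by
  obtain ⟨k, φ, hφ, rfl, rfl⟩ := h.exists_isCube
  by_cases haq : Γ.le a (φ Finset.univ)
  · rwa [hj.unique (isJoin_of_le haq).symm]
  · obtain ⟨ψ, hψ, h₀, h₁⟩ := hφ.exists_isCube_option ha haq hj
    simpa [h₀, h₁] using hψ.booleanPair

theorem booleanPair_of_ori {p q : V} (h : Γ.ori p q) : Γ.BooleanPair p q :=
  (booleanPair_refl p).of_isJoin_of_ori h (isJoin_of_le (Γ.le_of_ori h))

theorem booleanPair_of_isJoinOver {p q : V} {A : Set V} (hA : ∀ a ∈ A, Γ.ori p a)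
    (hq : Γ.IsJoinOver p A q) : Γ.BooleanPair p q := by
  suffices ∀ n j, Γ.G.dist j q = n → Γ.BooleanPair p j → Γ.le j q → Γ.BooleanPair p q from
    this _ p rfl (booleanPair_refl p) hq.1
  intro n
  induction n using Nat.strong_induction_on with
  | _ n ih =>
    intro j hn hj hjq
    by_cases hAj : ∀ a ∈ A, Γ.le a j
    · rwa [Γ.le_antisymm hjq (hq.2.2 j hj.le hAj)] at hj
    push Not at hAj
    obtain ⟨a, haA, haj⟩ := hAj
    obtain ⟨j', hj'⟩ := Γ.exists_isJoin hj.le (Γ.le_of_ori (hA a haA)) hjq (hq.2.1 a haA)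
    have hjj' := Γ.ori_of_isJoin (hA a haA) hj.le hj'.symm haj
    have hj'q := hj'.2.2 q hjq (hq.2.1 a haA)
    have hd := Γ.dist_add_dist_of_le (Γ.le_of_ori hjj') hj'q
    rw [Γ.dist_of_ori hjj'] at hd
    exact ih _ (by omega) j' rfl (hj.of_isJoin_of_ori (hA a haA) hj') hj'q

theorem BooleanPair.join {p q₁ q₂ j : V} (h₁ : Γ.BooleanPair p q₁) (h₂ : Γ.BooleanPair p q₂)
    (hj : Γ.IsJoin q₁ q₂ j) : Γ.BooleanPair p j := by
  obtain ⟨A₁, hA₁, hq₁⟩ := h₁.exists_isJoinOver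
  obtain ⟨A₂, hA₂, hq₂⟩ := h₂.exists_isJoinOver
  refine booleanPair_of_isJoinOver (A := A₁ ∪ A₂) (fun a ha => ha.elim (hA₁ a) (hA₂ a))
    ⟨hq₁.1.trans hj.1, ?_, fun v hpv hv => ?_⟩
  · rintro a (ha | ha)
    · exact (hq₁.2.1 a ha).trans hj.1
    · exact (hq₂.2.1 a ha).trans hj.2.1
  · exact hj.2.2 v (hq₁.2.2 v hpv fun a ha => hv a (.inl ha))
      (hq₂.2.2 v hpv fun a ha => hv a (.inr ha))

theorem BooleanPair.of_ori {p b c : V} (h : Γ.BooleanPair p c) (hbc : Γ.ori b c)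
    (hpb : Γ.le p b) : Γ.BooleanPair p b := by
  classical
  obtain ⟨A, hA, hc⟩ := h.exists_isJoinOver
  let B := Finset.univ.filter fun x => Γ.ori p x ∧ Γ.le x b
  have hB : ∀ x, x ∈ (B : Set V) ↔ Γ.ori p x ∧ Γ.le x b := by simp [B]
  obtain ⟨u, hu, hub⟩ := Γ.exists_isJoinOver B (fun x hx => Γ.le_of_ori ((hB x).mp hx).1)
    (fun x hx => ((hB x).mp hx).2) hpb
  suffices hu_eq : u = b from booleanPair_of_isJoinOver (fun x hx => ((hB x).mp hx).1) (hu_eq ▸ hu)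
  obtain ⟨a₁, ha₁A, ha₁b⟩ : ∃ a ∈ A, ¬ Γ.le a b := by
    by_contra! hAb
    exact Γ.ne_of_ori hbc (Γ.le_antisymm (Γ.le_of_ori hbc) (hc.2.2 b hpb hAb))
  obtain ⟨w, hw, huw⟩ := Γ.exists_isJoin_of_ori (hA a₁ ha₁A) hu.1 (hc.2.1 a₁ ha₁A)
    (hub.trans (Γ.le_of_ori hbc))
  have huw := huw fun h => ha₁b (h.trans hub)
  -- `w` covers `u` and lies above every atom in `A`, so `c ≤ w` has rank at most `rank u + 1`
  have hAw : ∀ a ∈ A, Γ.le a w := by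
    intro a haA
    by_cases hab : Γ.le a b
    · exact (hu.2.1 a ((hB a).mpr ⟨hA a haA, hab⟩)).trans hw.2.1
    by_cases haa₁ : a = a₁
    · exact haa₁ ▸ hw.1
    obtain ⟨s, hps, hsb, hs⟩ := Γ.exists_ori_le_of_ori hpb hbc (hA a₁ ha₁A) (hA a haA)
      (hc.2.1 a₁ ha₁A) (hc.2.1 a haA) ha₁b haa₁
    exact hs w ((hu.2.1 s ((hB s).mpr ⟨hps, hsb⟩)).trans hw.2.1) hw.1
  have hcw := hc.2.2 w (hu.1.trans hw.2.1) hAw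
  have h₁ := Γ.dist_add_dist_of_le hu.1 hub
  have h₂ := Γ.dist_add_dist_of_le hpb (Γ.le_of_ori hbc)
  have h₃ := Γ.dist_add_dist_of_le (hpb.trans (Γ.le_of_ori hbc)) hcw
  have h₄ := Γ.dist_add_dist_of_le hu.1 (Γ.le_of_ori huw)
  rw [Γ.dist_of_ori hbc] at h₂
  rw [Γ.dist_of_ori huw] at h₄
  exact Γ.eq_of_le_of_dist_eq hu.1 hub (by omega)

theorem BooleanPair.of_le {p q b : V} (h : Γ.BooleanPair p q) (hpb : Γ.le p b)
    (hbq : Γ.le b q) : Γ.BooleanPair p b := by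
  induction hbq using ReflTransGen.head_induction_on with
  | refl => exact h
  | head hbc _ ih => exact (ih (hpb.trans (Γ.le_of_ori hbc))).of_ori hbc hpb

theorem BooleanPair.of_le_of_le {p q a b : V} (h : Γ.BooleanPair p q) (hpa : Γ.le p a)
    (hab : Γ.le a b) (hbq : Γ.le b q) : Γ.BooleanPair a b :=
  ((h.of_le (hpa.trans hab) hbq).op.of_le ((Γ.op_le).mpr hab) ((Γ.op_le).mpr hpa)).op

theorem BooleanPair.meet {p₁ p₂ q m : V} (h₁ : Γ.BooleanPair p₁ q) (h₂ : Γ.BooleanPair p₂ q)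
    (hm : Γ.IsMeet p₁ p₂ m) : Γ.BooleanPair m q :=
  (h₁.op.join h₂.op (Γ.op_isJoin.mpr hm)).op

end BooleanPair

end ModularComplex

/-- The Boolean-pair relation of a modular complex is admissible. -/
theorem booleanPair_admissible (Γ : ModularComplex V) :
    (∀ p q : V, Γ.BooleanPair p q → Γ.le p q) ∧
    (∀ p : V, Γ.BooleanPair p p) ∧
    (∀ p q : V, Γ.ori p q → Γ.BooleanPair p q) ∧
    (∀ p q a b : V, Γ.BooleanPair p q → Γ.le a b →
      a ∈ Γ.Icc p q → b ∈ Γ.Icc p q → Γ.BooleanPair a b) ∧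
    (∀ p q1 q2 j : V, Γ.BooleanPair p q1 → Γ.BooleanPair p q2 →
      Γ.IsJoin q1 q2 j → Γ.BooleanPair p j) ∧
    (∀ p1 p2 q m : V, Γ.BooleanPair p1 q → Γ.BooleanPair p2 q →
      Γ.IsMeet p1 p2 m → Γ.BooleanPair m q) :=
  ⟨fun _ _ h => h.le, ModularComplex.booleanPair_refl,
    fun _ _ => ModularComplex.booleanPair_of_ori,
    fun _ _ _ _ h hab ha hb => h.of_le_of_le ha.1 hab hb.2,
    fun _ _ _ _ => ModularComplex.BooleanPair.join,
    fun _ _ _ _ => ModularComplex.BooleanPair.meet⟩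

end ZeroExt
end

section
/- Let (Γ,⊑) be an extended modular complex. Suppose p ⊑ q1, p ⊑ q2, q1 ≠ q2, and q is a vertex adjacent in the underlying graph to both q1 and q2. Then p ⊑ q. -/
namespace ZeroExt

variable {V : Type*}

variable [Fintype V]

/-!
In a modular graph the distances from any vertex `x` to the ends of an edge differ by one, and two
distinct vertices with a common neighbour, equidistant from `x`, have a common neighbour closer to
`x` (the quadrangle condition). Combined with admissibility, this shows that in a modular complex
directed edges towards an upper bound `x` decrease the distance to `x`, and that every neighbour of
`u ⪯ x` closer to `x` is again below `x`. Consequently two distinct lower neighbours `q1, q2` of `q`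
have `q` as their join: otherwise the quadrangle condition produces a vertex `y → q1` closer to `x`
than `q1`. Dually, two upper neighbours of `q` have `q` as their meet.

The theorem then follows by cases on the orientation of the edges `q q1` and `q q2`: if both point
into `q`, then `q = q1 ∨ q2` and axiom (ii) applies; otherwise `p ⪯ q ⪯ q1` or `p ⪯ q ⪯ q2` (using
the meet when both point out of `q`), and axiom (i) applies.
-/

open SimpleGraph Relation

section Modular

variable {α : Type*} {G : SimpleGraph α}

theorem Modular.dist_succ_or_of_adj (hG : G.Connected) (hm : Modular G) {u v : α}
    (huv : G.Adj u v) (x : α) :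
    G.dist u x + 1 = G.dist v x ∨ G.dist v x + 1 = G.dist u x := by
  obtain ⟨m, hmuv, hmvx, hmux⟩ := hm u v x
  simp only [interval, Set.mem_ofPred_eq, dist_eq_one_iff_adj.2 huv] at hmuv hmvx hmux
  rcases Nat.add_eq_one_iff.1 hmuv with ⟨hum, -⟩ | ⟨-, hmv⟩
  · obtain rfl := hG.dist_eq_zero_iff.1 hum
    rw [dist_comm, dist_eq_one_iff_adj.2 huv] at hmvx
    omega
  · obtain rfl := hG.dist_eq_zero_iff.1 hmv
    rw [dist_eq_one_iff_adj.2 huv] at hmux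
    omega

theorem Modular.exists_common_adj_closer (hG : G.Connected) (hm : Modular G) {v w c x : α}
    (hvc : G.Adj v c) (hwc : G.Adj w c) (hvw : v ≠ w) (hx : G.dist v x = G.dist w x) :
    ∃ y, G.Adj v y ∧ G.Adj w y ∧ G.dist y x + 1 = G.dist v x := by
  have hvw2 : G.dist v w = 2 := by
    have hle : G.dist v w ≤ G.dist v c + G.dist c w := hG.dist_triangle
    have hne1 : G.dist v w ≠ 1 := fun h =>
      (hm.dist_succ_or_of_adj hG (dist_eq_one_iff_adj.1 h) x).elim (by omega) (by omega)
    have hne0 : G.dist v w ≠ 0 := fun h => hvw (hG.dist_eq_zero_iff.1 h)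
    rw [dist_eq_one_iff_adj.2 hvc, dist_eq_one_iff_adj.2 hwc.symm] at hle
    omega
  obtain ⟨m, hmvw, hmwx, hmvx⟩ := hm v w x
  simp only [interval, Set.mem_ofPred_eq] at hmvw hmwx hmvx
  have hmv : G.dist v m = 1 := by rw [dist_comm (u := m)] at hmvw; omega
  have hmw : G.dist w m = 1 := by rw [dist_comm (u := m)] at hmvw; omega
  exact ⟨m, dist_eq_one_iff_adj.1 hmv, dist_eq_one_iff_adj.1 hmw, by omega⟩

end Modular

namespace ModularComplex

variable (Γ : ModularComplex V)

theorem ori_asymm {u v : V} (huv : Γ.ori u v) : ¬Γ.ori v u := fun hvu =>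
  (Γ.ori_adj huv).ne (Γ.acyclic (.single huv) (.single hvu))

theorem dist_eq_succ_of_ori_of_le_s3 {v x : V} (hvx : Γ.le v x) {u : V} (huv : Γ.ori u v) :
    Γ.G.dist u x = Γ.G.dist v x + 1 := by
  induction hvx using ReflTransGen.head_induction_on generalizing u with
  | refl => rw [dist_self, dist_eq_one_iff_adj.2 (Γ.ori_adj huv)]
  | @head v c hvc hcx ih =>
    have hv : Γ.G.dist v x = Γ.G.dist c x + 1 := ih hvc
    refine ((Γ.modular.dist_succ_or_of_adj Γ.connected (Γ.ori_adj huv) x).resolve_left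
      fun hu => ?_).symm
    have huc : u ≠ c := by
      rintro rfl
      exact Γ.ori_asymm huv hvc
    obtain ⟨y, huy, hcy, hy⟩ := Γ.modular.exists_common_adj_closer Γ.connected (x := x)
      (Γ.ori_adj huv) (Γ.ori_adj hvc).symm huc (by omega)
    have hcycle : IsFourCycle Γ.G u v c y :=
      ⟨Γ.ori_adj huv, Γ.ori_adj hvc, hcy, huy.symm, huc, by rintro rfl; omega⟩
    have := ih (Γ.admissible hcycle huv)
    omega

theorem le_of_adj_of_dist_succ_eq {u x : V} (hux : Γ.le u x) {z : V} (huz : Γ.G.Adj u z)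
    (hz : Γ.G.dist z x + 1 = Γ.G.dist u x) : Γ.le z x := by
  induction hux using ReflTransGen.head_induction_on generalizing z with
  | refl => rw [dist_self] at hz; omega
  | @head u w huw hwx ih =>
    by_cases hwz : w = z
    · exact hwz ▸ hwx
    have hu : Γ.G.dist u x = Γ.G.dist w x + 1 := Γ.dist_eq_succ_of_ori_of_le_s3 hwx huw
    obtain ⟨y, hwy, hzy, hy⟩ := Γ.modular.exists_common_adj_closer Γ.connected (x := x)
      (Γ.ori_adj huw).symm huz.symm hwz (by omega)
    have hcycle : IsFourCycle Γ.G u w y z :=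
      ⟨Γ.ori_adj huw, hwy, hzy.symm, huz.symm, by rintro rfl; omega, hwz⟩
    exact .head (Γ.admissible hcycle huw) (ih hwy hy)

theorem isJoin_of_ori_of_ori {q1 q2 q : V} (h1 : Γ.ori q1 q) (h2 : Γ.ori q2 q)
    (hne : q1 ≠ q2) : Γ.IsJoin q1 q2 q := by
  refine ⟨.single h1, .single h2, fun x hx1 hx2 => ?_⟩
  rcases Γ.modular.dist_succ_or_of_adj Γ.connected (Γ.ori_adj h1) x with hq1 | hq1
  swap
  · exact Γ.le_of_adj_of_dist_succ_eq hx1 (Γ.ori_adj h1) hq1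
  rcases Γ.modular.dist_succ_or_of_adj Γ.connected (Γ.ori_adj h2) x with hq2 | hq2
  swap
  · exact Γ.le_of_adj_of_dist_succ_eq hx2 (Γ.ori_adj h2) hq2
  exfalso
  obtain ⟨y, hq1y, hq2y, hy⟩ := Γ.modular.exists_common_adj_closer Γ.connected (x := x)
    (Γ.ori_adj h1) (Γ.ori_adj h2) hne (by omega)
  have hcycle : IsFourCycle Γ.G q2 q q1 y :=
    ⟨Γ.ori_adj h2, (Γ.ori_adj h1).symm, hq1y, hq2y.symm, hne.symm, by rintro rfl; omega⟩
  have := Γ.dist_eq_succ_of_ori_of_le_s3 hx1 (Γ.admissible hcycle h2)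
  omega

def rev : ModularComplex V where
  G := Γ.G
  connected := Γ.connected
  modular := Γ.modular
  ori x y := Γ.ori y x
  ori_adj h := (Γ.ori_adj h).symm
  ori_total h := Γ.ori_total h.symm
  acyclic h1 h2 := Γ.acyclic (reflTransGen_swap.1 h2) (reflTransGen_swap.1 h1)
  admissible := fun ⟨h12, h23, h34, h41, h13, h24⟩ h =>
    Γ.admissible ⟨h12.symm, h41.symm, h34.symm, h23.symm, h24, h13⟩ h

theorem rev_le {a b : V} : Γ.rev.le a b ↔ Γ.le b a :=
  reflTransGen_swap

theorem isMeet_of_ori_of_ori {q q1 q2 : V} (h1 : Γ.ori q q1) (h2 : Γ.ori q q2)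
    (hne : q1 ≠ q2) : Γ.IsMeet q1 q2 q := by
  obtain ⟨hq1, hq2, hq⟩ := Γ.rev.isJoin_of_ori_of_ori (q := q) h1 h2 hne
  exact ⟨Γ.rev_le.1 hq1, Γ.rev_le.1 hq2, fun x hx1 hx2 =>
    Γ.rev_le.1 (hq x (Γ.rev_le.2 hx1) (Γ.rev_le.2 hx2))⟩

end ModularComplex

theorem ExtendedModularComplex.sq_of_le_of_le (Γ : ExtendedModularComplex V) {p q r : V}
    (hpr : Γ.sq p r) (hpq : Γ.le p q) (hqr : Γ.le q r) : Γ.sq p q :=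
  Γ.sq_interval hpr hpq ⟨.refl, Γ.sq_le hpr⟩ ⟨hpq, hqr⟩

/-- If `p ⊑ q1`, `p ⊑ q2`, `q1 ≠ q2` and `q` is a common neighbor of
`q1, q2`, then `p ⊑ q`. -/
theorem sq_of_common_neighbor (Γ : ExtendedModularComplex V) (p q1 q2 q : V)
    (h1 : Γ.sq p q1) (h2 : Γ.sq p q2) (hne : q1 ≠ q2)
    (ha1 : Γ.G.Adj q q1) (ha2 : Γ.G.Adj q q2) : Γ.sq p q := by
  rcases Γ.ori_total ha1 with hq1 | hq1 <;> rcases Γ.ori_total ha2 with hq2 | hq2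
  · have hpq := (Γ.isMeet_of_ori_of_ori hq1 hq2 hne).2.2 p (Γ.sq_le h1) (Γ.sq_le h2)
    exact Γ.sq_of_le_of_le h1 hpq (.single hq1)
  · exact Γ.sq_of_le_of_le h1 ((Γ.sq_le h2).tail hq2) (.single hq1)
  · exact Γ.sq_of_le_of_le h2 ((Γ.sq_le h1).tail hq1) (.single hq2)
  · exact Γ.sq_join h1 h2 (Γ.isJoin_of_ori_of_ori hq1 hq2 hne)

end ZeroExt
end
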